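/- Let X and Y be positive definite complex n×n matrices, let ℓ ≥ 1, let N₁, …, N_ℓ be Hermitian complex n×n matrices with N_ℓ positive definite, and let L be a Hermitian complex n×n matrix. Suppose the block matrix [[X, N₁],[N₁, Y]] is positive semidefinite, for every i ∈ {1, …, ℓ−1} the block matrix [[X, N_{i+1}],[N_{i+1}, N_i]] is positive semidefinite, and the block matrix [[L, X],[X, N_ℓ]] is positive semidefinite. Then L ≥ G_{−2^{−ℓ}}(X,Y), i.e., L − G_{−2^{−ℓ}}(X,Y) is positive semidefinite. -/

import Mathlib

open Matrix Kronecker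
open scoped ComplexOrder

noncomputable section

/-- Apply a real function to a complex matrix via the spectral decomposition
(meaningful for Hermitian matrices; defined as `0` otherwise). -/
def matFun {n : Type*} [Fintype n] [DecidableEq n]
    (f : ℝ → ℝ) (A : Matrix n n ℂ) : Matrix n n ℂ :=
  if hA : A.IsHermitian then
    (hA.eigenvectorUnitary : Matrix n n ℂ) *
      Matrix.diagonal (fun i => (f (hA.eigenvalues i) : ℂ)) *
      (hA.eigenvectorUnitary : Matrix n n ℂ)ᴴ
  else 0

/-- Real power of a matrix (via the spectral decomposition). -/
def mpow {n : Type*} [Fintype n] [DecidableEq n] (A : Matrix n n ℂ) (t : ℝ) :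
    Matrix n n ℂ :=
  matFun (fun x => x ^ t) A

/-- Logarithm of a matrix (via the spectral decomposition). -/
def mlog {n : Type*} [Fintype n] [DecidableEq n] (A : Matrix n n ℂ) : Matrix n n ℂ :=
  matFun Real.log A

/-- The operator relative entropy `D_op(X‖Y) = X^{1/2} log(X^{1/2} Y⁻¹ X^{1/2}) X^{1/2}`. -/
def Dop {n : Type*} [Fintype n] [DecidableEq n] (X Y : Matrix n n ℂ) : Matrix n n ℂ :=
  mpow X (1/2) * mlog (mpow X (1/2) * Y⁻¹ * mpow X (1/2)) * mpow X (1/2)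

/-- The Belavkin--Staszewski relative entropy `D̂(ρ‖σ) = Re Tr[D_op(ρ‖σ)]`. -/
def BSEntropy {n : Type*} [Fintype n] [DecidableEq n] (ρ σ : Matrix n n ℂ) : ℝ :=
  (Dop ρ σ).trace.re

/-- The weighted matrix geometric mean `G_t(X,Y) = X^{1/2} (X^{-1/2} Y X^{-1/2})^t X^{1/2}`. -/
def geoMean {n : Type*} [Fintype n] [DecidableEq n] (t : ℝ) (X Y : Matrix n n ℂ) :
    Matrix n n ℂ :=
  mpow X (1/2) * mpow (mpow X (-(1/2)) * Y * mpow X (-(1/2))) t * mpow X (1/2)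

/-- Partial trace over the second (B) factor. -/
def ptraceB {R B : Type*} [Fintype B] (M : Matrix (R × B) (R × B) ℂ) : Matrix R R ℂ :=
  Matrix.of fun r r' => ∑ b, M (r, b) (r', b)

/-- Partial trace over the first (R) factor. -/
def ptraceR {R A : Type*} [Fintype R] (M : Matrix (R × A) (R × A) ℂ) : Matrix A A ℂ :=
  Matrix.of fun a a' => ∑ r, M (r, a) (r, a')

/-- The map associated to a Choi matrix `J` (indexed by `(A × B) × (A × B)`), applied to a
matrix indexed by `(R × A) × (R × A)`. -/
def choiMap {R A B : Type*} [Fintype A] (J : Matrix (A × B) (A × B) ℂ)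
    (X : Matrix (R × A) (R × A) ℂ) : Matrix (R × B) (R × B) ℂ :=
  Matrix.of fun p q => ∑ a, ∑ a', X (p.1, a) (q.1, a') * J (a, p.2) (a', q.2)

/-!
Write `M = X^{-1/2} Y X^{-1/2}`, so that `G_t(X,Y) = X^{1/2} M^t X^{1/2}`. The key step is halving:
if `N` is Hermitian and `N X⁻¹ N ≤ G_t(X,Y)`, conjugating by `X^{-1/2}` gives `C² ≤ M^t` for
`C = X^{-1/2} N X^{-1/2}`; as the square root is operator monotone, `C ≤ |C| ≤ M^{t/2}`, that is
`N ≤ G_{t/2}(X,Y)`. By Schur complements the block constraints read `N₁ X⁻¹ N₁ ≤ Y = G_1(X,Y)`,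
`N_{i+1} X⁻¹ N_{i+1} ≤ N_i` and `X N_ℓ⁻¹ X ≤ L`, so induction gives `N_i ≤ G_{2^{-i}}(X,Y)`.
Inversion is operator antitone, hence `L ≥ X N_ℓ⁻¹ X ≥ X G_{2^{-ℓ}}(X,Y)⁻¹ X = G_{-2^{-ℓ}}(X,Y)`.
-/

-- The operator norm makes `Matrix n n ℂ` a C⋆-algebra, so its operator-monotonicity results apply.
open scoped MatrixOrder Matrix.Norms.L2Operator

section CStarAlgebra

variable {A : Type*} [CStarAlgebra A] [PartialOrder A] [StarOrderedRing A]

lemma IsSelfAdjoint.le_abs {a : A} (ha : IsSelfAdjoint a) : a ≤ CFC.abs a := by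
  rw [← sub_nonneg, CFC.abs_sub_self a ha]
  exact nsmul_nonneg (CFC.negPart_nonneg a) 2

lemma IsSelfAdjoint.le_of_mul_self_le_mul_self {a b : A} (ha : IsSelfAdjoint a) (hb : 0 ≤ b)
    (h : a * a ≤ b * b) : a ≤ b :=
  calc a ≤ CFC.abs a := ha.le_abs
    _ = CFC.sqrt (a * a) := by rw [CFC.abs, ha.star_eq]
    _ ≤ CFC.sqrt (b * b) := CFC.sqrt_le_sqrt _ _ h
    _ = b := CFC.sqrt_mul_self b

lemma IsStrictlyPositive.rpow_mul_mul_rpow {a b : A} (ha : IsStrictlyPositive a)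
    (hb : IsStrictlyPositive b) (t : ℝ) : IsStrictlyPositive (a ^ t * b * a ^ t) :=
  IsStrictlyPositive.conjugate_of_isUnit_of_isSelfAdjoint _ _ (ha.rpow a t).isUnit
    (.of_nonneg CFC.rpow_nonneg) hb

end CStarAlgebra

lemma mul_mul_mul_cancel {M : Type*} [Monoid M] {r s : M} (hsr : s * r = 1) (hrs : r * s = 1)
    (p : M) : s * (r * p * r) * s = p := by
  rw [show s * (r * p * r) * s = s * r * p * (r * s) by simp only [mul_assoc], hsr, hrs, one_mul,
    mul_one]

namespace Matrix

theorem IsHermitian.isHermitian_of_fromBlocks {α n : Type*} [InvolutiveStar α]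
    {A B D : Matrix n n α} (h : (Matrix.fromBlocks A B B D).IsHermitian) : B.IsHermitian :=
  (isHermitian_fromBlocks_iff.mp h).2.1

section SchurComplement

variable {𝕜 n : Type*} [RCLike 𝕜] [Fintype n] [DecidableEq n] {A B D : Matrix n n 𝕜}

theorem PosSemidef.mul_inv_mul_le_of_fromBlocks₁₁ (hA : A.PosDef)
    (h : (fromBlocks A B B D).PosSemidef) : B * A⁻¹ * B ≤ D := by
  let _ := hA.isUnit.invertible
  have hB := h.isHermitian.isHermitian_of_fromBlocks
  rw [le_iff]
  simpa only [hB.eq] using (PosDef.fromBlocks₁₁ B D hA).mp (by rwa [hB.eq])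

theorem PosSemidef.mul_inv_mul_le_of_fromBlocks₂₂ (hD : D.PosDef)
    (h : (fromBlocks A B B D).PosSemidef) : B * D⁻¹ * B ≤ A := by
  let _ := hD.isUnit.invertible
  have hB := h.isHermitian.isHermitian_of_fromBlocks
  rw [le_iff]
  simpa only [hB.eq] using (PosDef.fromBlocks₂₂ A B hD).mp (by rwa [hB.eq])

end SchurComplement

variable {n : Type*} [Fintype n] [DecidableEq n]

theorem matFun_eq_cfc (f : ℝ → ℝ) (A : Matrix n n ℂ) : matFun f A = cfc f A := by
  by_cases hA : A.IsHermitian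
  · rw [hA.cfc_eq, matFun, dif_pos hA, IsHermitian.cfc, Unitary.conjStarAlgAut_apply]
    rfl
  · rw [matFun, dif_neg hA, cfc_apply_of_not_predicate]
    exact hA

theorem PosSemidef.mpow_eq_rpow {A : Matrix n n ℂ} (hA : A.PosSemidef) (t : ℝ) :
    mpow A t = A ^ t := by
  rw [CFC.rpow_eq_cfc_real hA.nonneg, mpow, matFun_eq_cfc]

theorem PosDef.rpow_inv {A : Matrix n n ℂ} (hA : A.PosDef) (t : ℝ) : (A ^ t)⁻¹ = A ^ (-t) :=
  inv_eq_left_inv (CFC.rpow_neg_mul_rpow t hA.isStrictlyPositive)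

theorem PosDef.inv_eq_rpow_neg_one {A : Matrix n n ℂ} (hA : A.PosDef) : A⁻¹ = A ^ (-1 : ℝ) := by
  rw [← hA.rpow_inv, CFC.rpow_one A hA.posSemidef.nonneg]

theorem PosDef.inv_le_inv {A B : Matrix n n ℂ} (hA : A.PosDef) (hAB : A ≤ B) : B⁻¹ ≤ A⁻¹ := by
  have hB : B.PosDef := (hA.isStrictlyPositive.of_le hAB).posDef
  rw [hA.inv_eq_rpow_neg_one, hB.inv_eq_rpow_neg_one]
  exact CStarAlgebra.rpow_neg_one_le_rpow_neg_one hAB hA.isStrictlyPositive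

end Matrix

section GeometricMean

variable {n : Type*} [Fintype n] [DecidableEq n] {X Y : Matrix n n ℂ}

theorem geoMean_eq_rpow (hX : X.PosDef) (hY : Y.PosSemidef) (t : ℝ) :
    geoMean t X Y = X ^ (1 / 2 : ℝ) *
      (X ^ (-(1 / 2) : ℝ) * Y * X ^ (-(1 / 2) : ℝ)) ^ t * X ^ (1 / 2 : ℝ) := by
  have hR' : IsSelfAdjoint (X ^ (-(1 / 2) : ℝ)) := .of_nonneg CFC.rpow_nonneg
  rw [geoMean, hX.posSemidef.mpow_eq_rpow, hX.posSemidef.mpow_eq_rpow,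
    PosSemidef.mpow_eq_rpow (hR'.conjugate_nonneg hY.nonneg).posSemidef]

theorem geoMean_one (hX : X.PosDef) (hY : Y.PosSemidef) : geoMean 1 X Y = Y := by
  have hR' : IsSelfAdjoint (X ^ (-(1 / 2) : ℝ)) := .of_nonneg CFC.rpow_nonneg
  rw [geoMean_eq_rpow hX hY, CFC.rpow_one _ (hR'.conjugate_nonneg hY.nonneg),
    mul_mul_mul_cancel (CFC.rpow_mul_rpow_neg _ hX.isStrictlyPositive)
      (CFC.rpow_neg_mul_rpow _ hX.isStrictlyPositive)]

theorem le_geoMean_half_of_mul_inv_mul_le (hX : X.PosDef) (hY : Y.PosDef) {N : Matrix n n ℂ}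
    (hN : N.IsHermitian) {t : ℝ} (h : N * X⁻¹ * N ≤ geoMean t X Y) : N ≤ geoMean (t / 2) X Y := by
  rw [geoMean_eq_rpow hX hY.posSemidef] at h ⊢
  set R := X ^ (1 / 2 : ℝ)
  set R' := X ^ (-(1 / 2) : ℝ)
  have hR'R : R' * R = 1 := CFC.rpow_neg_mul_rpow _ hX.isStrictlyPositive
  have hRR' : R * R' = 1 := CFC.rpow_mul_rpow_neg _ hX.isStrictlyPositive
  have hR : IsSelfAdjoint R := .of_nonneg CFC.rpow_nonneg
  have hR' : IsSelfAdjoint R' := .of_nonneg CFC.rpow_nonneg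
  have hM : IsStrictlyPositive (R' * Y * R') :=
    hX.isStrictlyPositive.rpow_mul_mul_rpow hY.isStrictlyPositive _
  have hXinv : X⁻¹ = R' * R' := by
    rw [hX.inv_eq_rpow_neg_one, ← CFC.rpow_add hX.isUnit]
    norm_num
  have hsq : (R' * N * R') * (R' * N * R') ≤ (R' * Y * R') ^ (t / 2) * (R' * Y * R') ^ (t / 2) := by
    rw [← CFC.rpow_add hM.isUnit, add_halves]
    have := hR'.conjugate_le_conjugate h
    rwa [mul_mul_mul_cancel hR'R hRR', hXinv,
      show R' * (N * (R' * R') * N) * R' = (R' * N * R') * (R' * N * R') by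
        simp only [mul_assoc]] at this
  have hle := (hN.isSelfAdjoint.conjugate_self hR').le_of_mul_self_le_mul_self CFC.rpow_nonneg hsq
  simpa only [mul_mul_mul_cancel hRR' hR'R] using hR.conjugate_le_conjugate hle

theorem geoMean_neg (hX : X.PosDef) (hY : Y.PosDef) (t : ℝ) :
    geoMean (-t) X Y = X * (geoMean t X Y)⁻¹ * X := by
  have hM := hX.isStrictlyPositive.rpow_mul_mul_rpow hY.isStrictlyPositive (-(1 / 2))
  rw [geoMean_eq_rpow hX hY.posSemidef, geoMean_eq_rpow hX hY.posSemidef, Matrix.mul_inv_rev,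
    Matrix.mul_inv_rev, hX.rpow_inv, hM.posDef.rpow_inv]
  set R := X ^ (1 / 2 : ℝ)
  set R' := X ^ (-(1 / 2) : ℝ)
  set P := (X ^ (-(1 / 2) : ℝ) * Y * X ^ (-(1 / 2) : ℝ)) ^ (-t)
  have hRR' : R * R' = 1 := CFC.rpow_mul_rpow_neg _ hX.isStrictlyPositive
  have hXRR : X = R * R := by
    rw [← CFC.rpow_add hX.isUnit]
    norm_num [CFC.rpow_one X hX.posSemidef.nonneg]
  calc R * P * R = R * (R * R' * P * (R' * R)) * R := by
        rw [hRR', CFC.rpow_neg_mul_rpow _ hX.isStrictlyPositive, one_mul, mul_one]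
    _ = X * (R' * (P * R')) * X := by
        rw [hXRR]; simp only [mul_assoc]

end GeometricMean

theorem geoMean_sdp_chain_neg_power_general {n ℓ : ℕ} (hℓ : 1 ≤ ℓ)
    (X Y : Matrix (Fin n) (Fin n) ℂ) (hX : X.PosDef) (hY : Y.PosDef)
    (N : ℕ → Matrix (Fin n) (Fin n) ℂ)
    (hNℓ : (N ℓ).PosDef)
    (L : Matrix (Fin n) (Fin n) ℂ)
    (h1 : (Matrix.fromBlocks X (N 1) (N 1) Y).PosSemidef)
    (hstep : ∀ i, 1 ≤ i → i + 1 ≤ ℓ →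
      (Matrix.fromBlocks X (N (i + 1)) (N (i + 1)) (N i)).PosSemidef)
    (hLblk : (Matrix.fromBlocks L X X (N ℓ)).PosSemidef) :
    (L - geoMean (-((2 : ℝ) ^ (-(ℓ : ℤ)))) X Y).PosSemidef := by
  have chain : ∀ i, 1 ≤ i → i ≤ ℓ → N i ≤ geoMean ((2 : ℝ) ^ (-(i : ℤ))) X Y := by
    intro i hi
    induction i, hi using Nat.le_induction with
    | base =>
      intro _
      have hN := h1.isHermitian.isHermitian_of_fromBlocks
      have hNY : N 1 * X⁻¹ * N 1 ≤ geoMean 1 X Y := by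
        rw [geoMean_one hX hY.posSemidef]
        exact h1.mul_inv_mul_le_of_fromBlocks₁₁ hX
      convert le_geoMean_half_of_mul_inv_mul_le hX hY hN hNY using 2
      norm_num
    | succ i hi ih =>
      intro hle
      have hN := (hstep i hi hle).isHermitian.isHermitian_of_fromBlocks
      convert le_geoMean_half_of_mul_inv_mul_le hX hY hN
        (((hstep i hi hle).mul_inv_mul_le_of_fromBlocks₁₁ hX).trans (ih (by omega))) using 2
      rw [Nat.cast_succ, neg_add, zpow_add₀ two_ne_zero]
      norm_num
      ring
  calc geoMean (-((2 : ℝ) ^ (-(ℓ : ℤ)))) X Y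
      = X * (geoMean ((2 : ℝ) ^ (-(ℓ : ℤ))) X Y)⁻¹ * X := geoMean_neg hX hY _
    _ ≤ X * (N ℓ)⁻¹ * X :=
      hX.isHermitian.isSelfAdjoint.conjugate_le_conjugate (hNℓ.inv_le_inv (chain ℓ hℓ le_rfl))
    _ ≤ L := hLblk.mul_inv_mul_le_of_fromBlocks₂₂ hNℓ

/-- the chain of semidefinite constraints, together with
`[[L, X],[X, N_ℓ]] ⪰ 0`, implies `L ≥ G_{−2^{−ℓ}}(X,Y)`. -/
theorem geoMean_sdp_chain_neg_power {n ℓ : ℕ} (hℓ : 1 ≤ ℓ)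
    (X Y : Matrix (Fin n) (Fin n) ℂ) (hX : X.PosDef) (hY : Y.PosDef)
    (N : ℕ → Matrix (Fin n) (Fin n) ℂ)
    (hHerm : ∀ i, 1 ≤ i → i ≤ ℓ → (N i).IsHermitian)
    (hNℓ : (N ℓ).PosDef)
    (L : Matrix (Fin n) (Fin n) ℂ) (hL : L.IsHermitian)
    (h1 : (Matrix.fromBlocks X (N 1) (N 1) Y).PosSemidef)
    (hstep : ∀ i, 1 ≤ i → i + 1 ≤ ℓ →
      (Matrix.fromBlocks X (N (i + 1)) (N (i + 1)) (N i)).PosSemidef)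
    (hLblk : (Matrix.fromBlocks L X X (N ℓ)).PosSemidef) :
    (L - geoMean (-((2 : ℝ) ^ (-(ℓ : ℤ)))) X Y).PosSemidef :=
  geoMean_sdp_chain_neg_power_general hℓ X Y hX hY N hNℓ L h1 hstep hLblk
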